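/- Let v : Fin n → α (with n ≥ 1) together with o, c : α → ℝ be an admissible candidate stream. Suppose for some index k with k + 1 < n the termination condition holds: min over i ≤ k of c (v i) is at most o (v (k+1)). Then every index j with o (v j) strictly less than the global minimum of c (v i) over all i < n satisfies j ≤ k. (Completeness half of Theorem 1 for a single search queue: before terminating, the best-first algorithm has examined every candidate view whose OptCost is below the optimal rewrite cost Cost(r*), so in particular the candidate producing the optimal rewrite has been examined.) -/
import Mathlib


/-- Completeness half of Theorem 1 for a single search queue: for an admissible
candidate stream, if the termination condition holds at index `k` (the cheapest
rewrite found among `i ≤ k` costs no more than the OptCost of `v (k+1)`), then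
every candidate whose OptCost is strictly below the global optimal rewrite cost
has already been examined, i.e. its index is at most `k`. -/
theorem stmt_2 {α : Type*} {n : ℕ} (hn : 1 ≤ n) (v : Fin n → α) (o c : α → ℝ)
    (hlb : ∀ i : Fin n, o (v i) ≤ c (v i))
    (hsorted : ∀ i j : Fin n, i ≤ j → o (v i) ≤ o (v j))
    (k : ℕ) (hk : k + 1 < n)
    (hterm : (Finset.univ.filter (fun i : Fin n => (i : ℕ) ≤ k)).inf'
        ⟨⟨0, by omega⟩, by simp⟩ (fun i => c (v i)) ≤ o (v ⟨k + 1, hk⟩)) :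
    ∀ j : Fin n,
      o (v j) < Finset.univ.inf' ⟨⟨0, by omega⟩, Finset.mem_univ _⟩ (fun i => c (v i)) →
      (j : ℕ) ≤ k := by
  intro j hj
  by_contra hjk
  push_neg at hjk
  obtain ⟨i, hi, hmin⟩ := Finset.exists_mem_eq_inf'
    (⟨⟨0, by omega⟩, by simp⟩ : (Finset.univ.filter (fun i : Fin n => (i : ℕ) ≤ k)).Nonempty)
    (fun i => c (v i))
  have h1 : Finset.univ.inf' ⟨⟨0, by omega⟩, Finset.mem_univ _⟩ (fun i => c (v i)) ≤ c (v i) :=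
    Finset.inf'_le _ (Finset.mem_univ _)
  have h2 : o (v ⟨k + 1, hk⟩) ≤ o (v j) := hsorted _ _ (by simp [Fin.le_def]; omega)
  rw [hmin] at hterm
  linarith
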